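/- For each a ≥ 0 and ε > 0, the set of compact metric spaces X whose set of distance values contains the whole interval [a, a+ε] is closed in the Gromov-Hausdorff space and has empty interior. -/

import Mathlib

/-!
Distance sets move continuously in the Gromov–Hausdorff metric: inside an optimal coupling each
pair of points of `Y` is `r`-close to a pair of points of `X` when `d_GH(X, Y) < r`, so every
distance value of `Y` lies within `2r` of a compact set of distance values of `X`. Hence
"`t` is a distance value" is a closed condition. On the other hand finite spaces (finite nets) are
dense in the Gromov–Hausdorff space and have only finitely many distance values, so no space
realising a whole interval of distances has a neighbourhood of such spaces.
-/

open GromovHausdorff Metric Set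

def distValues (X : Type*) [PseudoMetricSpace X] : Set ℝ := {d | ∃ x y : X, dist x y = d}

section distValues

variable {X : Type*} [PseudoMetricSpace X]

theorem distValues_eq_range : distValues X = range fun z : X × X => dist z.1 z.2 := by
  ext d
  simp [distValues]

theorem isCompact_distValues [CompactSpace X] : IsCompact (distValues X) := by
  rw [distValues_eq_range]
  exact isCompact_range (continuous_fst.dist continuous_snd)

theorem distValues_nonempty [Nonempty X] : (distValues X).Nonempty :=
  let x : X := Classical.arbitrary X
  ⟨dist x x, x, x, rfl⟩

theorem finite_distValues [Finite X] : (distValues X).Finite := by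
  rw [distValues_eq_range]
  exact finite_range _

end distValues

section GromovHausdorff

variable {X Y : Type*} [MetricSpace X] [CompactSpace X] [Nonempty X]
  [MetricSpace Y] [CompactSpace Y] [Nonempty Y]

theorem exists_mem_distValues_dist_le_of_ghDist_lt {t r : ℝ} (ht : t ∈ distValues Y)
    (hr : ghDist X Y < r) : ∃ s ∈ distValues X, dist s t ≤ 2 * r := by
  obtain ⟨y₁, y₂, rfl⟩ := ht
  set Φ := optimalGHInjl X Y
  set Ψ := optimalGHInjr X Y
  have hΦΨ : hausdorffDist (range Φ) (range Ψ) < r := by rwa [hausdorffDist_optimal]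
  have hfin : hausdorffEDist (range Φ) (range Ψ) ≠ ⊤ :=
    hausdorffEDist_ne_top_of_nonempty_of_bounded (range_nonempty _) (range_nonempty _)
      (isCompact_range (isometry_optimalGHInjl X Y).continuous).isBounded
      (isCompact_range (isometry_optimalGHInjr X Y).continuous).isBounded
  obtain ⟨_, ⟨x₁, rfl⟩, h₁⟩ := exists_dist_lt_of_hausdorffDist_lt' (mem_range_self y₁) hΦΨ hfin
  obtain ⟨_, ⟨x₂, rfl⟩, h₂⟩ := exists_dist_lt_of_hausdorffDist_lt' (mem_range_self y₂) hΦΨ hfin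
  refine ⟨dist x₁ x₂, ⟨x₁, x₂, rfl⟩, ?_⟩
  rw [← (isometry_optimalGHInjl X Y).dist_eq, ← (isometry_optimalGHInjr X Y).dist_eq]
  linarith [dist_dist_dist_le (Φ x₁) (Φ x₂) (Ψ y₁) (Ψ y₂)]

theorem ghDist_le_of_forall_exists_dist_le {s : Set X} [Nonempty s] [CompactSpace s] {δ : ℝ}
    (hδ : 0 ≤ δ) (hs : ∀ x : X, ∃ y ∈ s, dist x y ≤ δ) : ghDist X s ≤ δ := by
  calc ghDist X s ≤ hausdorffDist (range id) (range ((↑) : s → X)) :=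
        ghDist_le_hausdorffDist isometry_id isometry_subtype_coe
    _ ≤ δ := by
        rw [range_id, Subtype.range_coe]
        exact hausdorffDist_le_of_mem_dist hδ (fun x _ => hs x)
          fun y hy => ⟨y, mem_univ y, (dist_self y).le.trans hδ⟩

end GromovHausdorff

theorem isClosed_setOf_mem_distValues (t : ℝ) :
    IsClosed {p : GHSpace | t ∈ distValues p.Rep} := by
  refine isClosed_of_closure_subset fun p hp => ?_
  have hinfDist : infDist t (distValues p.Rep) ≤ 0 := by
    refine le_of_forall_pos_le_add fun r hr => ?_
    obtain ⟨q, hq, hpq⟩ := mem_closure_iff.1 hp (r / 2) (half_pos hr)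
    rw [dist_ghDist] at hpq
    obtain ⟨s, hs, hst⟩ := exists_mem_distValues_dist_le_of_ghDist_lt hq hpq
    calc infDist t (distValues p.Rep) ≤ dist t s := infDist_le_dist_of_mem hs
      _ ≤ 0 + r := by rw [dist_comm]; linarith
  exact (isCompact_distValues.isClosed.mem_iff_infDist_zero distValues_nonempty).2
    (hinfDist.antisymm infDist_nonneg)

theorem isClosed_setOf_subset_distValues (T : Set ℝ) :
    IsClosed {p : GHSpace | T ⊆ distValues p.Rep} := by
  simp only [subset_def, ofPred_forall]
  exact isClosed_biInter fun t _ => isClosed_setOf_mem_distValues t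

theorem dense_setOf_finite_rep : Dense {p : GHSpace | Finite p.Rep} := by
  refine Metric.dense_iff.2 fun p δ hδ => ?_
  obtain ⟨s, -, hs, hcover⟩ := finite_approx_of_totallyBounded
    (isCompact_univ (X := p.Rep)).totallyBounded (δ / 2) (half_pos hδ)
  have hnear : ∀ x : p.Rep, ∃ y ∈ s, dist x y ≤ δ / 2 := fun x => by
    obtain ⟨y, hy, hxy⟩ := mem_iUnion₂.1 (hcover (mem_univ x))
    exact ⟨y, hy, (mem_ball.1 hxy).le⟩
  have : Finite s := hs.to_subtype
  obtain ⟨y, hy, -⟩ := hnear (Classical.arbitrary p.Rep)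
  have : Nonempty s := ⟨⟨y, hy⟩⟩
  obtain ⟨e⟩ := toGHSpace_eq_toGHSpace_iff_isometryEquiv.1 (toGHSpace s).toGHSpace_rep
  refine ⟨toGHSpace s, ?_, Finite.of_equiv s e.toEquiv.symm⟩
  have hdist : dist p (toGHSpace s) = ghDist p.Rep s := by rw [ghDist, p.toGHSpace_rep]
  rw [mem_ball, dist_comm, hdist]
  exact (ghDist_le_of_forall_exists_dist_le (half_pos hδ).le hnear).trans_lt (half_lt_self hδ)

theorem interior_setOf_subset_distValues_eq_empty {T : Set ℝ} (hT : T.Infinite) :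
    interior {p : GHSpace | T ⊆ distValues p.Rep} = ∅ := by
  refine interior_eq_empty_iff_dense_compl.2 (dense_setOf_finite_rep.mono fun p hp hT' => ?_)
  have : Finite p.Rep := hp
  exact hT (finite_distValues.subset hT')

theorem isClosed_interior_empty_interval_distances_general (a ε : ℝ) (hε : 0 < ε) :
    IsClosed {p : GHSpace | Set.Icc a (a + ε) ⊆ {d : ℝ | ∃ x y : p.Rep, dist x y = d}} ∧
    interior {p : GHSpace | Set.Icc a (a + ε) ⊆ {d : ℝ | ∃ x y : p.Rep, dist x y = d}} = ∅ :=
  ⟨isClosed_setOf_subset_distValues _,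
    interior_setOf_subset_distValues_eq_empty (Icc_infinite (by linarith))⟩

/-- For each `a ≥ 0` and `ε > 0`, the set of compact metric spaces whose set of distance
values contains the whole interval `[a, a+ε]` is closed with empty interior in the
Gromov-Hausdorff space. -/
theorem isClosed_interior_empty_interval_distances (a ε : ℝ) (ha : 0 ≤ a) (hε : 0 < ε) :
    IsClosed {p : GHSpace | Set.Icc a (a + ε) ⊆ {d : ℝ | ∃ x y : p.Rep, dist x y = d}} ∧
    interior {p : GHSpace | Set.Icc a (a + ε) ⊆ {d : ℝ | ∃ x y : p.Rep, dist x y = d}} = ∅ :=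
  isClosed_interior_empty_interval_distances_general a ε hε
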